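/- arXiv:1304.1420 — 3 statements merged into one kernel-verified Lean document; each statement's English description precedes it below -/
import Mathlib

section
/- Let f : ℝ → ℝ be twice continuously differentiable with bounded second derivative, let N be a positive integer, K ≥ 0, and let λ_1,…,λ_N ∈ [0,∞), β_1,…,β_N ∈ [0,K], and m_1,…,m_N ∈ {0,1}. Define 𝒥_n = (1/N)·∑_{n'=1}^N ( f(λ_{n'} + β_{n'}/N) − f(λ_{n'}) )·m_{n'} − (1/N)·f(λ_n), and set A = ∑_{n=1}^N λ_n 𝒥_n m_n − [ ((1/N)∑_{n=1}^N λ_n m_n)·((1/N)∑_{n=1}^N β_n f′(λ_n) m_n) − (1/N)∑_{n=1}^N λ_n f(λ_n) m_n ]. Then |A| ≤ (K²·sup_{x∈ℝ}|f″(x)| / N) · ( (1/N)·∑_{n=1}^N λ_n ). -/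
/-!
Pulling the factors that do not depend on the summation index out of the sums, the error term
factors exactly as `((1/N) ∑ λₙ mₙ) · ∑ₙ (f(λₙ + βₙ/N) - f(λₙ) - (βₙ/N) f'(λₙ)) mₙ`. The first
factor is at most `(1/N) ∑ λₙ`, and each of the `N` first-order Taylor remainders in the second
is at most `sup |f''| · (K/N)²`.
-/

open Finset Set

section

variable {f : ℝ → ℝ} {M : ℝ} {ι : Type*} [Fintype ι]

lemma abs_deriv_sub_deriv_le (hf : ContDiff ℝ 2 f) (hM : ∀ t, |iteratedDeriv 2 f t| ≤ M)
    (x y : ℝ) : |deriv f y - deriv f x| ≤ M * |y - x| := by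
  have hd : Differentiable ℝ (deriv f) := by
    simpa only [iteratedDeriv_one] using hf.differentiable_iteratedDeriv 1 (by norm_num)
  simpa only [Real.norm_eq_abs] using convex_univ.norm_image_sub_le_of_norm_deriv_le
    (fun t _ => hd t) (fun t _ => by simpa [iteratedDeriv_succ] using hM t)
    (mem_univ x) (mem_univ y)

lemma abs_sub_sub_mul_deriv_le (hf : ContDiff ℝ 2 f) (hM : ∀ t, |iteratedDeriv 2 f t| ≤ M)
    (x h : ℝ) : |f (x + h) - f x - h * deriv f x| ≤ M * h ^ 2 := by
  have hd : Differentiable ℝ f := hf.differentiable (by norm_num)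
  -- mean value theorem for `t ↦ f t - t f'(x)`: its derivative is `M`-Lipschitz, zero at `x`
  have key := (convex_uIcc x (x + h)).norm_image_sub_le_of_norm_hasDerivWithin_le
    (f := fun t => f t - t * deriv f x) (f' := fun t => deriv f t - deriv f x) (C := M * |h|)
    (fun t _ => ((hd t).hasDerivAt.sub (hasDerivAt_mul_const (deriv f x))).hasDerivWithinAt)
    (fun t ht => by
      calc ‖deriv f t - deriv f x‖ ≤ M * |t - x| := abs_deriv_sub_deriv_le hf hM x t
        _ ≤ M * |h| := mul_le_mul_of_nonneg_left (by simpa using abs_sub_left_of_mem_uIcc ht)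
          ((abs_nonneg _).trans (hM 0)))
    left_mem_uIcc right_mem_uIcc
  calc |f (x + h) - f x - h * deriv f x|
      = ‖(f (x + h) - (x + h) * deriv f x) - (f x - x * deriv f x)‖ := by
        rw [Real.norm_eq_abs]; ring_nf
    _ ≤ M * |h| * ‖x + h - x‖ := key
    _ = M * h ^ 2 := by rw [add_sub_cancel_left, Real.norm_eq_abs, mul_assoc, abs_mul_abs_self, sq]

lemma drift_error_eq_mul_sum (c : ℝ) (lam m D F L : ι → ℝ) :
    ∑ n, lam n * (c * ∑ n', D n' * m n' - c * F n) * m n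
        - ((c * ∑ n, lam n * m n) * (c * ∑ n, L n * m n) - c * ∑ n, lam n * F n * m n)
      = (c * ∑ n, lam n * m n) * ∑ n, (D n - c * L n) * m n := by
  have hfirst : ∑ n, lam n * (c * ∑ n', D n' * m n' - c * F n) * m n
      = c * (∑ n', D n' * m n') * ∑ n, lam n * m n - c * ∑ n, lam n * F n * m n := by
    calc _ = ∑ n, (c * (∑ n', D n' * m n') * (lam n * m n) - c * (lam n * F n * m n)) :=
          sum_congr rfl fun n _ => by ring
      _ = _ := by rw [sum_sub_distrib, ← mul_sum, ← mul_sum]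
  have hremainder : ∑ n, (D n - c * L n) * m n = ∑ n', D n' * m n' - c * ∑ n, L n * m n := by
    rw [mul_sum, ← sum_sub_distrib]
    exact sum_congr rfl fun n _ => by ring
  rw [hfirst, hremainder]
  ring

lemma abs_sum_mul_le_sum {lam m : ι → ℝ} (hlam : ∀ n, 0 ≤ lam n) (hm : ∀ n, |m n| ≤ 1) :
    |∑ n, lam n * m n| ≤ ∑ n, lam n :=
  (abs_sum_le_sum_abs _ _).trans <| sum_le_sum fun n _ => by
    rw [abs_mul, abs_of_nonneg (hlam n)]
    exact mul_le_of_le_one_right (hlam n) (hm n)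

lemma abs_sum_taylor_remainder_mul_le {δ : ℝ} (hf : ContDiff ℝ 2 f)
    (hM : ∀ t, |iteratedDeriv 2 f t| ≤ M) {x h m : ι → ℝ} (hh : ∀ n, |h n| ≤ δ)
    (hm : ∀ n, |m n| ≤ 1) :
    |∑ n, (f (x n + h n) - f (x n) - h n * deriv f (x n)) * m n|
      ≤ Fintype.card ι * (M * δ ^ 2) := by
  have hM0 : 0 ≤ M := (abs_nonneg _).trans (hM 0)
  calc _ ≤ ∑ n, |(f (x n + h n) - f (x n) - h n * deriv f (x n)) * m n| := abs_sum_le_sum_abs _ _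
    _ ≤ ∑ _n : ι, M * δ ^ 2 := sum_le_sum fun n _ => by
        rw [abs_mul]
        calc _ ≤ M * h n ^ 2 * 1 :=
              mul_le_mul (abs_sub_sub_mul_deriv_le hf hM _ _) (hm n) (abs_nonneg _)
                (by positivity)
          _ ≤ M * δ ^ 2 := by
              rw [mul_one, ← sq_abs (h n)]
              gcongr
              exact hh n
    _ = Fintype.card ι * (M * δ ^ 2) := by rw [sum_const, card_univ, nsmul_eq_mul]

end

theorem drift_error_term_estimate_general
    (f : ℝ → ℝ) (hf : ContDiff ℝ 2 f)
    (hbdd : BddAbove (Set.range fun x => |iteratedDeriv 2 f x|))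
    (N : ℕ) (K : ℝ)
    (lam β m : Fin N → ℝ)
    (hlam : ∀ n, 0 ≤ lam n)
    (hβ : ∀ n, β n ∈ Set.Icc (0 : ℝ) K)
    (hm : ∀ n, m n = 0 ∨ m n = 1) :
    |(∑ n, lam n *
          ((1 / (N : ℝ)) * ∑ n', (f (lam n' + β n' / N) - f (lam n')) * m n'
            - (1 / (N : ℝ)) * f (lam n)) * m n)
      - (((1 / (N : ℝ)) * ∑ n, lam n * m n) *
            ((1 / (N : ℝ)) * ∑ n, β n * deriv f (lam n) * m n)
          - (1 / (N : ℝ)) * ∑ n, lam n * f (lam n) * m n)|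
    ≤ (K ^ 2 * (⨆ x, |iteratedDeriv 2 f x|) / (N : ℝ)) *
        ((1 / (N : ℝ)) * ∑ n, lam n) := by
  set M := ⨆ x, |iteratedDeriv 2 f x|
  have hM : ∀ t, |iteratedDeriv 2 f t| ≤ M := le_ciSup hbdd
  have hm1 : ∀ n, |m n| ≤ 1 := fun n => by rcases hm n with h | h <;> simp [h]
  have hβN : ∀ n, |β n / N| ≤ K / N := fun n => by
    rw [abs_of_nonneg (div_nonneg (hβ n).1 N.cast_nonneg)]
    exact div_le_div_of_nonneg_right (hβ n).2 N.cast_nonneg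
  have hremainder := abs_sum_taylor_remainder_mul_le hf hM (x := lam) hβN hm1
  rw [Fintype.card_fin] at hremainder
  rw [drift_error_eq_mul_sum, abs_mul, abs_mul, abs_of_nonneg (by positivity), mul_comm]
  gcongr
  · exact div_nonneg (mul_nonneg (sq_nonneg K) ((abs_nonneg _).trans (hM 0))) N.cast_nonneg
  · calc |∑ n, (f (lam n + β n / N) - f (lam n) - 1 / N * (β n * deriv f (lam n))) * m n|
          = |∑ n, (f (lam n + β n / N) - f (lam n) - β n / N * deriv f (lam n)) * m n| := by
            congr 1; exact sum_congr rfl fun n _ => by ring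
      _ ≤ N * (M * (K / N) ^ 2) := hremainder
      _ = K ^ 2 * M * (N / (N * N)) := by ring
      _ = K ^ 2 * M / N := by rw [div_self_mul_self', div_eq_mul_inv]
  · exact abs_sum_mul_le_sum hlam hm1

/-- deterministic core of the first bound in Lemma 6.1 — the drift
error term `Â^N[f]` arising from replacing the jump terms by their linearization. -/
theorem drift_error_term_estimate
    (f : ℝ → ℝ) (hf : ContDiff ℝ 2 f)
    (hbdd : BddAbove (Set.range fun x => |iteratedDeriv 2 f x|))
    (N : ℕ) (hN : 0 < N) (K : ℝ) (hK : 0 ≤ K)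
    (lam β m : Fin N → ℝ)
    (hlam : ∀ n, 0 ≤ lam n)
    (hβ : ∀ n, β n ∈ Set.Icc (0 : ℝ) K)
    (hm : ∀ n, m n = 0 ∨ m n = 1) :
    |(∑ n, lam n *
          ((1 / (N : ℝ)) * ∑ n', (f (lam n' + β n' / N) - f (lam n')) * m n'
            - (1 / (N : ℝ)) * f (lam n)) * m n)
      - (((1 / (N : ℝ)) * ∑ n, lam n * m n) *
            ((1 / (N : ℝ)) * ∑ n, β n * deriv f (lam n) * m n)
          - (1 / (N : ℝ)) * ∑ n, lam n * f (lam n) * m n)|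
    ≤ (K ^ 2 * (⨆ x, |iteratedDeriv 2 f x|) / (N : ℝ)) *
        ((1 / (N : ℝ)) * ∑ n, lam n) :=
  drift_error_term_estimate_general f hf hbdd N K lam β m hlam hβ hm
end

section
/- Let J ≥ 0 be an integer and let (w, ρ) be an admissible weight pair of order J+1 on [0,∞). Then there exists a constant C > 0, depending only on J and the weight constants, such that for every ψ ∈ C_c^∞((0,∞)): | ∑_{k=0}^{J} ∫_0^∞ w(λ)² ρ(λ)^{2k} · λ · ψ^{(k+1)}(λ) · ψ^{(k)}(λ) dλ | ≤ C · ‖ψ‖_J². -/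
open scoped BigOperators
open MeasureTheory
open scoped ContDiff

/-- The weighted Sobolev norm squared:
`‖ψ‖_J² = ∑_{k=0}^J ∫_0^∞ w(λ)² ρ(λ)^{2k} |ψ^{(k)}(λ)|² dλ`. -/
noncomputable def sobNormSq (w ρ : ℝ → ℝ) (J : ℕ) (ψ : ℝ → ℝ) : ℝ :=
  ∑ k ∈ Finset.range (J + 1),
    ∫ x in Set.Ioi (0 : ℝ), w x ^ 2 * ρ x ^ (2 * k) * (iteratedDeriv k ψ x) ^ 2

/-- An admissible weight pair of order `m` on `[0,∞)` (the paper's Condition 3.1):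
`w, ρ` smooth, `w > 0`, `ρ` comparable to `1 + λ`, and
`|ρ^{(k)}| ≤ C₀ ρ^{1-k}`, `|w^{(k)}| ≤ C₀ w ρ^{-k}` for `1 ≤ k ≤ m` on `[0,∞)`. -/
def IsAdmissibleWeightPair (m : ℕ) (w ρ : ℝ → ℝ) : Prop :=
  ContDiff ℝ (⊤ : ℕ∞) w ∧ ContDiff ℝ (⊤ : ℕ∞) ρ ∧ (∀ x, 0 < w x) ∧
  (∃ c₁ c₂ : ℝ, 0 < c₁ ∧ 0 < c₂ ∧
    ∀ x : ℝ, 0 ≤ x → c₁ * (1 + x) ≤ ρ x ∧ ρ x ≤ c₂ * (1 + x)) ∧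
  (∃ C₀ : ℝ, 0 < C₀ ∧
    ∀ x : ℝ, 0 ≤ x → ∀ k : ℕ, 1 ≤ k → k ≤ m →
      |iteratedDeriv k ρ x| ≤ C₀ * ρ x ^ ((1 : ℤ) - k) ∧
      |iteratedDeriv k w x| ≤ C₀ * w x * ρ x ^ (-(k : ℤ)))

/-- Infinitely differentiable functions `ℝ → ℝ` with compact support contained
in `(0, ∞)`. -/
def IsCcInfOnPos (ψ : ℝ → ℝ) : Prop :=
  ContDiff ℝ (⊤ : ℕ∞) ψ ∧ HasCompactSupport ψ ∧ tsupport ψ ⊆ Set.Ioi 0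

lemma tsupport_iteratedDeriv_subset' (ψ : ℝ → ℝ) (k : ℕ) :
    tsupport (iteratedDeriv k ψ) ⊆ tsupport ψ := by
  induction k with
  | zero => simp [iteratedDeriv_zero]
  | succ n ih =>
      rw [iteratedDeriv_succ]
      exact (closure_minimal support_deriv_subset (isClosed_tsupport _)).trans ih

lemma perterm (w ρ : ℝ → ℝ) (hw : ContDiff ℝ (⊤ : ℕ∞) w) (hρ : ContDiff ℝ (⊤ : ℕ∞) ρ)
    (hwpos : ∀ x, 0 < w x) (c₁ C₀ : ℝ) (hc₁ : 0 < c₁) (hC₀ : 0 < C₀)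
    (hlow : ∀ x : ℝ, 0 ≤ x → c₁ * (1 + x) ≤ ρ x)
    (hw1 : ∀ x : ℝ, 0 ≤ x → |deriv w x| ≤ C₀ * w x * (ρ x)⁻¹)
    (hρ1 : ∀ x : ℝ, 0 ≤ x → |deriv ρ x| ≤ C₀)
    (k : ℕ) (ψ : ℝ → ℝ) (hψ : ContDiff ℝ (⊤ : ℕ∞) ψ) (hψc : HasCompactSupport ψ)
    (hψs : tsupport ψ ⊆ Set.Ioi 0) :
    |∫ x in Set.Ioi (0:ℝ),
        w x ^ 2 * ρ x ^ (2*k) * x * iteratedDeriv (k+1) ψ x * iteratedDeriv k ψ x|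
      ≤ (((2*C₀ + 2*k*C₀)/c₁ + 1)/2) *
        ∫ x in Set.Ioi (0:ℝ), w x ^ 2 * ρ x ^ (2*k) * (iteratedDeriv k ψ x)^2 := by
  have hρpos : ∀ x : ℝ, 0 ≤ x → 0 < ρ x := fun x hx =>
    lt_of_lt_of_le (by positivity) (hlow x hx)
  set g := iteratedDeriv k ψ with hgdef
  set g1 := iteratedDeriv (k+1) ψ with hg1def
  have hψ' : ContDiff ℝ ∞ ψ := hψ.of_le (by simp)
  have hw' : ContDiff ℝ ∞ w := hw.of_le (by simp)
  have hρ' : ContDiff ℝ ∞ ρ := hρ.of_le (by simp)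
  have hg : ContDiff ℝ ∞ g := by
    rw [hgdef, iteratedDeriv_eq_iterate]; exact hψ'.iterate_deriv k
  have hg1 : ContDiff ℝ ∞ g1 := by
    rw [hg1def, iteratedDeriv_eq_iterate]; exact hψ'.iterate_deriv (k+1)
  have hgs : tsupport g ⊆ Set.Ioi 0 := (tsupport_iteratedDeriv_subset' ψ k).trans hψs
  have cw := hw.continuous
  have cw' : Continuous (deriv w) := hw.continuous_deriv (by simp)
  have cρ := hρ.continuous
  have cρ' : Continuous (deriv ρ) := hρ.continuous_deriv (by simp)
  have cg := hg.continuous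
  have cg1 := hg1.continuous
  set P : ℝ → ℝ := fun x => w x ^ 2 * ρ x ^ (2*k) with hP
  set p : ℝ → ℝ := fun x =>
      ((2:ℕ) : ℝ) * w x ^ (2-1) * deriv w x * ρ x ^ (2*k)
        + w x ^ 2 * (((2*k : ℕ) : ℝ) * ρ x ^ (2*k-1) * deriv ρ x) with hp
  set A : ℝ → ℝ := fun x => (p x * x + P x * 1) * g x ^ 2 with hA
  set B : ℝ → ℝ := fun x => (P x * x) * (((2:ℕ):ℝ) * g x ^ (2-1) * g1 x) with hB
  set F : ℝ → ℝ := fun x => (P x * x) * g x ^ 2 with hF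
  have h1inf : (∞ : WithTop ℕ∞) ≠ 0 := by simp
  have hgD : ∀ x : ℝ, HasDerivAt g (g1 x) x := by
    intro x
    have h := ((hg.differentiable h1inf) x).hasDerivAt
    rw [hg1def, iteratedDeriv_succ, ← hgdef]
    exact h
  have hFD : ∀ x : ℝ, HasDerivAt F (A x + B x) x := by
    intro x
    exact ((((((hw'.differentiable h1inf) x).hasDerivAt.pow 2).mul
      (((hρ'.differentiable h1inf) x).hasDerivAt.pow (2*k))).mul (hasDerivAt_id x)).mul
      ((hgD x).pow 2))
  have hFc : HasCompactSupport F := by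
    apply hψc.mono'
    intro x hx
    have hgx : g x ≠ 0 := by
      intro h0; exact hx (by simp [hF, h0])
    exact (tsupport_iteratedDeriv_subset' ψ k) (subset_tsupport _ hgx)
  have hAc : HasCompactSupport A := by
    apply hψc.mono'
    intro x hx
    have hgx : g x ≠ 0 := by
      intro h0; exact hx (by simp [hA, h0])
    exact (tsupport_iteratedDeriv_subset' ψ k) (subset_tsupport _ hgx)
  have hBc : HasCompactSupport B := by
    apply hψc.mono'
    intro x hx
    have hgx : g x ≠ 0 := by
      intro h0; exact hx (by simp [hB, h0])
    exact (tsupport_iteratedDeriv_subset' ψ k) (subset_tsupport _ hgx)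
  have hSc : HasCompactSupport (fun x => P x * g x ^ 2) := by
    apply hψc.mono'
    intro x hx
    have hgx : g x ≠ 0 := by
      intro h0; exact hx (by simp [h0])
    exact (tsupport_iteratedDeriv_subset' ψ k) (subset_tsupport _ hgx)
  have hF1 : ContDiff ℝ 1 F :=
    ((((hw'.pow 2).mul (hρ'.pow (2*k))).mul contDiff_id).mul (hg.pow 2)).of_le (by norm_num)
  have contP : Continuous P := (cw.pow 2).mul (cρ.pow (2*k))
  have contp : Continuous p := by fun_prop
  have contA : Continuous A := by fun_prop
  have contB : Continuous B := by fun_prop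
  have contS : Continuous (fun x => P x * g x ^ 2) := by fun_prop
  have intA : IntegrableOn A (Set.Ioi 0) :=
    (contA.integrable_of_hasCompactSupport hAc).integrableOn
  have intB : IntegrableOn B (Set.Ioi 0) :=
    (contB.integrable_of_hasCompactSupport hBc).integrableOn
  have intS : IntegrableOn (fun x => P x * g x ^ 2) (Set.Ioi 0) :=
    (contS.integrable_of_hasCompactSupport hSc).integrableOn
  have hF0 : F 0 = 0 := by
    have hg0 : g 0 = 0 := by
      apply image_eq_zero_of_notMem_tsupport
      intro h
      exact lt_irrefl (0:ℝ) (hgs h)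
    simp [hF, hg0]
  have hIBP : (∫ x in Set.Ioi (0:ℝ), (A x + B x)) = 0 := by
    have h := HasCompactSupport.integral_Ioi_deriv_eq hF1 hFc 0
    rw [hF0, neg_zero] at h
    have e : (∫ x in Set.Ioi (0:ℝ), (A x + B x)) = ∫ x in Set.Ioi (0:ℝ), deriv F x :=
      setIntegral_congr_fun measurableSet_Ioi (fun x _ => ((hFD x).deriv).symm)
    rw [e, h]
  have hsplit : (∫ x in Set.Ioi (0:ℝ), A x) + (∫ x in Set.Ioi (0:ℝ), B x) = 0 := by
    rw [← integral_add intA intB]; exact hIBP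
  have hBt : (∫ x in Set.Ioi (0:ℝ), B x)
      = 2 * ∫ x in Set.Ioi (0:ℝ), w x ^ 2 * ρ x ^ (2*k) * x * g1 x * g x := by
    rw [← integral_const_mul]
    exact setIntegral_congr_fun measurableSet_Ioi
      (fun x _ => by simp only [hB, hP]; push_cast; ring)
  set Mk : ℝ := (2*C₀ + 2*(k:ℝ)*C₀)/c₁ + 1 with hMk
  have hmain : ∀ x ∈ Set.Ioi (0:ℝ), |A x| ≤ Mk * (P x * g x ^ 2) := by
    intro x hx
    have hx0 : (0:ℝ) ≤ x := (le_of_lt hx)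
    have hρx : 0 < ρ x := hρpos x hx0
    have hwx : 0 < w x := hwpos x
    have hPx : 0 ≤ P x := by simp only [hP]; positivity
    have hAeq : |A x| = |p x * x + P x * 1| * g x ^ 2 := by
      rw [hA]
      rw [abs_mul, abs_of_nonneg (sq_nonneg (g x))]
    rw [hAeq]
    have hkey : |p x * x + P x * 1| ≤ Mk * P x := by
      have hK : (0:ℝ) ≤ 2*C₀ + 2*(k:ℝ)*C₀ := by positivity
      -- bound |p x|
      have ht1 : |((2:ℕ) : ℝ) * w x ^ (2-1) * deriv w x * ρ x ^ (2*k)|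
          ≤ 2*C₀ * (P x / ρ x) := by
        have h1 : |((2:ℕ) : ℝ) * w x ^ (2-1) * deriv w x * ρ x ^ (2*k)|
            = 2 * w x * |deriv w x| * ρ x ^ (2*k) := by
          rw [abs_mul, abs_mul, abs_mul, Nat.abs_cast,
            abs_of_nonneg (pow_nonneg hρx.le _), abs_of_nonneg (pow_nonneg hwx.le _)]
          norm_num
        rw [h1]
        have h2 := hw1 x hx0
        have h3 : 2 * w x * |deriv w x| * ρ x ^ (2*k)
            ≤ 2 * w x * (C₀ * w x * (ρ x)⁻¹) * ρ x ^ (2*k) := by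
          apply mul_le_mul_of_nonneg_right _ (pow_nonneg hρx.le _)
          apply mul_le_mul_of_nonneg_left h2 (by positivity)
        refine h3.trans (le_of_eq ?_)
        simp only [hP]
        field_simp
      have ht2 : |w x ^ 2 * (((2*k : ℕ) : ℝ) * ρ x ^ (2*k-1) * deriv ρ x)|
          ≤ 2*(k:ℝ)*C₀ * (P x / ρ x) := by
        rcases k with _ | n
        · simp
        · have h1 : |w x ^ 2 * (((2*(n+1) : ℕ) : ℝ) * ρ x ^ (2*(n+1)-1) * deriv ρ x)|
              = w x ^ 2 * (((2*(n+1) : ℕ) : ℝ) * ρ x ^ (2*(n+1)-1) * |deriv ρ x|) := by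
            rw [abs_mul, abs_mul, abs_mul, Nat.abs_cast,
              abs_of_nonneg (sq_nonneg (w x)), abs_of_nonneg (pow_nonneg hρx.le _)]
          rw [h1]
          have h2 := hρ1 x hx0
          have h3 : w x ^ 2 * (((2*(n+1) : ℕ) : ℝ) * ρ x ^ (2*(n+1)-1) * |deriv ρ x|)
              ≤ w x ^ 2 * (((2*(n+1) : ℕ) : ℝ) * ρ x ^ (2*(n+1)-1) * C₀) := by
            apply mul_le_mul_of_nonneg_left _ (sq_nonneg _)
            apply mul_le_mul_of_nonneg_left h2 (by positivity)
          refine h3.trans (le_of_eq ?_)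
          have hpow : ρ x ^ (2*(n+1)-1) = ρ x ^ (2*(n+1)) / ρ x := by
            rw [eq_div_iff hρx.ne', ← pow_succ]
            congr 1
            try omega
          simp only [hP, hpow]
          push_cast
          field_simp
      have hpabs : |p x| ≤ (2*C₀ + 2*(k:ℝ)*C₀) * (P x / ρ x) := by
        calc |p x| ≤ _ + _ := abs_add_le _ _
          _ ≤ 2*C₀ * (P x / ρ x) + 2*(k:ℝ)*C₀ * (P x / ρ x) := add_le_add ht1 ht2
          _ = (2*C₀ + 2*(k:ℝ)*C₀) * (P x / ρ x) := by ring
      have hxdiv : x / ρ x ≤ 1 / c₁ := by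
        rw [div_le_div_iff₀ hρx hc₁]
        nlinarith [hlow x hx0]
      have hpx : |p x| * x ≤ ((2*C₀ + 2*(k:ℝ)*C₀)/c₁) * P x := by
        calc |p x| * x ≤ ((2*C₀ + 2*(k:ℝ)*C₀) * (P x / ρ x)) * x :=
              mul_le_mul_of_nonneg_right hpabs hx0
          _ = ((2*C₀ + 2*(k:ℝ)*C₀) * P x) * (x / ρ x) := by ring
          _ ≤ ((2*C₀ + 2*(k:ℝ)*C₀) * P x) * (1 / c₁) :=
              mul_le_mul_of_nonneg_left hxdiv (by positivity)
          _ = ((2*C₀ + 2*(k:ℝ)*C₀)/c₁) * P x := by ring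
      calc |p x * x + P x * 1| ≤ |p x * x| + |P x * 1| := abs_add_le _ _
        _ = |p x| * x + P x := by
            rw [abs_mul, abs_of_nonneg hx0, mul_one, abs_of_nonneg hPx]
        _ ≤ ((2*C₀ + 2*(k:ℝ)*C₀)/c₁) * P x + P x := by linarith
        _ = Mk * P x := by rw [hMk]; ring
    calc |p x * x + P x * 1| * g x ^ 2 ≤ (Mk * P x) * g x ^ 2 :=
          mul_le_mul_of_nonneg_right hkey (sq_nonneg _)
      _ = Mk * (P x * g x ^ 2) := by ring
  -- assemble
  have hMkpos : 0 < Mk := by rw [hMk]; positivity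
  have hT : (∫ x in Set.Ioi (0:ℝ), w x ^ 2 * ρ x ^ (2*k) * x * g1 x * g x)
      = -(∫ x in Set.Ioi (0:ℝ), A x) / 2 := by
    have := hsplit
    rw [hBt] at this
    linarith
  rw [hT]
  have habs : |(-(∫ x in Set.Ioi (0:ℝ), A x) / 2)| = |∫ x in Set.Ioi (0:ℝ), A x| / 2 := by
    rw [abs_div, abs_neg]
    norm_num
  rw [habs]
  have h1 : |∫ x in Set.Ioi (0:ℝ), A x| ≤ ∫ x in Set.Ioi (0:ℝ), |A x| := by
    simpa [Real.norm_eq_abs] using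
      norm_integral_le_integral_norm (μ := volume.restrict (Set.Ioi 0)) A
  have h2 : (∫ x in Set.Ioi (0:ℝ), |A x|)
      ≤ ∫ x in Set.Ioi (0:ℝ), Mk * (P x * g x ^ 2) := by
    apply setIntegral_mono_on intA.abs (intS.const_mul Mk) measurableSet_Ioi hmain
  have h3 : (∫ x in Set.Ioi (0:ℝ), Mk * (P x * g x ^ 2))
      = Mk * ∫ x in Set.Ioi (0:ℝ), P x * g x ^ 2 := integral_const_mul _ _
  have h4 : (∫ x in Set.Ioi (0:ℝ), P x * g x ^ 2)
      = ∫ x in Set.Ioi (0:ℝ), w x ^ 2 * ρ x ^ (2*k) * g x ^ 2 := by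
    simp only [hP]
  have hfin : |∫ x in Set.Ioi (0:ℝ), A x|
      ≤ Mk * ∫ x in Set.Ioi (0:ℝ), w x ^ 2 * ρ x ^ (2*k) * g x ^ 2 := by
    rw [← h4, ← h3]
    exact h1.trans h2
  have hgoal : (((2*C₀ + 2*(k:ℝ)*C₀)/c₁ + 1)/2) *
      (∫ x in Set.Ioi (0:ℝ), w x ^ 2 * ρ x ^ (2*k) * g x ^ 2)
      = (Mk * ∫ x in Set.Ioi (0:ℝ), w x ^ 2 * ρ x ^ (2*k) * g x ^ 2) / 2 := by
    rw [hMk]; ring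
  rw [hgoal]
  gcongr

/-- first estimate of Lemma 8.1 (integration by parts):
`|∑_k ∫ w²ρ^{2k} λ ψ^{(k+1)} ψ^{(k)}| ≤ C ‖ψ‖_J²`. -/
theorem integration_by_parts_first_estimate
    (J : ℕ) (w ρ : ℝ → ℝ) (hwρ : IsAdmissibleWeightPair (J + 1) w ρ) :
    ∃ C : ℝ, 0 < C ∧ ∀ ψ : ℝ → ℝ, IsCcInfOnPos ψ →
      |∑ k ∈ Finset.range (J + 1),
          ∫ x in Set.Ioi (0 : ℝ),
            w x ^ 2 * ρ x ^ (2 * k) * x * iteratedDeriv (k + 1) ψ x * iteratedDeriv k ψ x|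
        ≤ C * sobNormSq w ρ J ψ := by
  obtain ⟨hw, hρ, hwpos, ⟨c₁, c₂, hc₁, hc₂, hcc⟩, C₀, hC₀, hC⟩ := hwρ
  have hlow : ∀ x : ℝ, 0 ≤ x → c₁ * (1 + x) ≤ ρ x := fun x hx => (hcc x hx).1
  have hρpos : ∀ x : ℝ, 0 ≤ x → 0 < ρ x := fun x hx =>
    lt_of_lt_of_le (by positivity) (hlow x hx)
  have hw1 : ∀ x : ℝ, 0 ≤ x → |deriv w x| ≤ C₀ * w x * (ρ x)⁻¹ := by
    intro x hx
    have h := (hC x hx 1 le_rfl (by omega)).2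
    simpa [iteratedDeriv_one, zpow_neg, zpow_one] using h
  have hρ1 : ∀ x : ℝ, 0 ≤ x → |deriv ρ x| ≤ C₀ := by
    intro x hx
    have h := (hC x hx 1 le_rfl (by omega)).1
    simpa [iteratedDeriv_one] using h
  have hCpos : 0 < ((2*C₀ + 2*(J:ℝ)*C₀)/c₁ + 1)/2 := by
    have h0 : (0:ℝ) ≤ (2*C₀ + 2*(J:ℝ)*C₀)/c₁ :=
      div_nonneg (by positivity) hc₁.le
    linarith
  refine ⟨((2*C₀ + 2*(J:ℝ)*C₀)/c₁ + 1)/2, hCpos, ?_⟩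
  rintro ψ ⟨hψ, hψc, hψs⟩
  have key : ∀ k ∈ Finset.range (J+1),
      |∫ x in Set.Ioi (0:ℝ),
          w x ^ 2 * ρ x ^ (2*k) * x * iteratedDeriv (k+1) ψ x * iteratedDeriv k ψ x|
        ≤ (((2*C₀ + 2*(J:ℝ)*C₀)/c₁ + 1)/2) *
          ∫ x in Set.Ioi (0:ℝ), w x ^ 2 * ρ x ^ (2*k) * (iteratedDeriv k ψ x)^2 := by
    intro k hk
    have hkJ : (k:ℝ) ≤ (J:ℝ) := by
      exact_mod_cast Nat.lt_succ_iff.mp (Finset.mem_range.mp hk)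
    have hS : 0 ≤ ∫ x in Set.Ioi (0:ℝ), w x ^ 2 * ρ x ^ (2*k) * (iteratedDeriv k ψ x)^2 :=
      setIntegral_nonneg measurableSet_Ioi (fun x _ => by
        have h : (0:ℝ) ≤ ρ x ^ (2*k) := by rw [pow_mul]; positivity
        exact mul_nonneg (mul_nonneg (sq_nonneg _) h) (sq_nonneg _))
    refine (perterm w ρ hw hρ hwpos c₁ C₀ hc₁ hC₀ hlow hw1 hρ1 k ψ hψ hψc hψs).trans ?_
    apply mul_le_mul_of_nonneg_right _ hS
    gcongr
  calc |∑ k ∈ Finset.range (J + 1),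
          ∫ x in Set.Ioi (0 : ℝ),
            w x ^ 2 * ρ x ^ (2 * k) * x * iteratedDeriv (k + 1) ψ x * iteratedDeriv k ψ x|
      ≤ ∑ k ∈ Finset.range (J + 1),
          |∫ x in Set.Ioi (0 : ℝ),
            w x ^ 2 * ρ x ^ (2 * k) * x * iteratedDeriv (k + 1) ψ x * iteratedDeriv k ψ x| :=
        Finset.abs_sum_le_sum_abs _ _
    _ ≤ ∑ k ∈ Finset.range (J + 1),
          (((2*C₀ + 2*(J:ℝ)*C₀)/c₁ + 1)/2) *
            ∫ x in Set.Ioi (0:ℝ), w x ^ 2 * ρ x ^ (2*k) * (iteratedDeriv k ψ x)^2 :=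
        Finset.sum_le_sum key
    _ = (((2*C₀ + 2*(J:ℝ)*C₀)/c₁ + 1)/2) * sobNormSq w ρ J ψ := by
        rw [sobNormSq, Finset.mul_sum]
end

section
/- Let J ≥ 0 be an integer and let (w, ρ) be an admissible weight pair of order J+1 on [0,∞). Then there exists a constant C > 0, depending only on J and the weight constants, such that for all ψ, ζ ∈ C_c^∞((0,∞)): ( ∑_{k=0}^{J} ∫_0^∞ w(λ)² ρ(λ)^{2k} ψ^{(k)}(λ) · D^k(λ ζ′(λ)) dλ )² ≤ ( ∑_{k=0}^{J} ∫_0^∞ w(λ)² ρ(λ)^{2k} ( λ|ψ^{(k+1)}(λ)| + C|ψ^{(k)}(λ)| )² dλ ) · ‖ζ‖_J², where D^k denotes the k-th derivative in λ. -/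
open scoped BigOperators
open MeasureTheory

section Aux
open MeasureTheory Set

lemma iterHasDerivAt {f : ℝ → ℝ} (hf : ContDiff ℝ (⊤ : ℕ∞) f) (k : ℕ) (x : ℝ) :
    HasDerivAt (iteratedDeriv k f) (iteratedDeriv (k+1) f x) x := by
  have h1 : Differentiable ℝ (iteratedDeriv k f) :=
    hf.differentiable_iteratedDeriv k (by exact_mod_cast lt_top_iff_ne_top.2 (by simp))
  have := (h1 x).hasDerivAt
  rwa [iteratedDeriv_succ]

lemma iterCont {f : ℝ → ℝ} (hf : ContDiff ℝ (⊤ : ℕ∞) f) (k : ℕ) :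
    Continuous (iteratedDeriv k f) :=
  (hf.differentiable_iteratedDeriv k
    (by exact_mod_cast lt_top_iff_ne_top.2 (by simp))).continuous

lemma iterLeibniz {ζ : ℝ → ℝ} (hζ : ContDiff ℝ (⊤ : ℕ∞) ζ) (k : ℕ) (x : ℝ) :
    iteratedDeriv k (fun y => y * deriv ζ y) x
      = x * iteratedDeriv (k+1) ζ x + k * iteratedDeriv k ζ x := by
  induction k generalizing x with
  | zero => simp [iteratedDeriv_one]
  | succ k ih =>
    rw [iteratedDeriv_succ]
    have hfun : iteratedDeriv k (fun y => y * deriv ζ y)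
        = fun y => y * iteratedDeriv (k+1) ζ y + (k:ℝ) * iteratedDeriv k ζ y := funext ih
    rw [hfun]
    have h1 : HasDerivAt (fun y => y * iteratedDeriv (k+1) ζ y + (k:ℝ) * iteratedDeriv k ζ y)
        ((1 * iteratedDeriv (k+1) ζ x + x * iteratedDeriv (k+1+1) ζ x)
          + (k:ℝ) * iteratedDeriv (k+1) ζ x) x :=
      ((hasDerivAt_id x).mul (iterHasDerivAt hζ (k+1) x)).add
        ((iterHasDerivAt hζ k x).const_mul (k:ℝ))
    rw [h1.deriv]
    push_cast
    ring

lemma tsupport_iter (f : ℝ → ℝ) (k : ℕ) : tsupport (iteratedDeriv k f) ⊆ tsupport f := by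
  induction k with
  | zero => simp [iteratedDeriv_zero]
  | succ k ih =>
    rw [iteratedDeriv_succ]
    exact (closure_minimal support_deriv_subset (isClosed_tsupport _)).trans ih

lemma iter_zero {f : ℝ → ℝ} {x : ℝ} (hx : x ∉ tsupport f) (k : ℕ) :
    iteratedDeriv k f x = 0 :=
  image_eq_zero_of_notMem_tsupport (fun h => hx (tsupport_iter f k h))

lemma keybound (J k : ℕ) (hk : k ≤ J) {C₀ c₁ a a' b b' x pk pk1 : ℝ}
    (hC₀ : 0 < C₀) (hc₁ : 0 < c₁) (ha : 0 < a) (hb : 0 < b) (hx : 0 < x)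
    (ha' : b * |a'| ≤ C₀ * a) (hb' : |b'| ≤ C₀) (hxb : c₁ * x ≤ b) :
    |(((k:ℝ) - 1) * (a^2*b^(2*k)) - ((2*a*b^(2*k)*x)*a' + (2*(k:ℝ)*a^2*b^(2*k-1)*x)*b')) * pk
      - (a^2*b^(2*k)*x) * pk1|
    ≤ a^2*b^(2*k) * (x* |pk1| + (((J:ℝ)+2) + 2*((J:ℝ)+1)*C₀/c₁)* |pk|) := by
  have hP : (0:ℝ) < a^2*b^(2*k) := by positivity
  set C : ℝ := ((J:ℝ)+2) + 2*((J:ℝ)+1)*C₀/c₁ with hC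
  -- bound the coefficient of pk
  have h2 : c₁ * ((2*a*b^(2*k)*x)* |a'|) ≤ 2*C₀*(a^2*b^(2*k)) := by
    calc c₁ * ((2*a*b^(2*k)*x)* |a'|) = 2*a*b^(2*k)*((c₁*x)* |a'|) := by ring
      _ ≤ 2*a*b^(2*k)*(b* |a'|) := by
          apply mul_le_mul_of_nonneg_left (mul_le_mul_of_nonneg_right hxb (abs_nonneg _))
          positivity
      _ ≤ 2*a*b^(2*k)*(C₀*a) := by
          apply mul_le_mul_of_nonneg_left ha'; positivity
      _ = 2*C₀*(a^2*b^(2*k)) := by ring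
  have h3 : c₁ * ((2*(k:ℝ)*a^2*b^(2*k-1)*x)* |b'|) ≤ 2*(k:ℝ)*C₀*(a^2*b^(2*k)) := by
    rcases Nat.eq_zero_or_pos k with hk0 | hk0
    · subst hk0; simp
    · have hbk : b^(2*k-1)*b = b^(2*k) := by
        rw [← pow_succ]; congr 1; omega
      calc c₁ * ((2*(k:ℝ)*a^2*b^(2*k-1)*x)* |b'|)
          = 2*(k:ℝ)*a^2*b^(2*k-1)*(|b'| *(c₁*x)) := by ring
        _ ≤ 2*(k:ℝ)*a^2*b^(2*k-1)*(C₀*b) := by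
            apply mul_le_mul_of_nonneg_left (mul_le_mul hb' hxb (by positivity) hC₀.le)
            positivity
        _ = 2*(k:ℝ)*C₀*(a^2*(b^(2*k-1)*b)) := by ring
        _ = 2*(k:ℝ)*C₀*(a^2*b^(2*k)) := by rw [hbk]
  have habs2 : |(2*a*b^(2*k)*x)*a'| = (2*a*b^(2*k)*x)* |a'| := by
    rw [abs_mul, abs_of_pos (by positivity : (0:ℝ) < 2*a*b^(2*k)*x)]
  have habs3 : |(2*(k:ℝ)*a^2*b^(2*k-1)*x)*b'| = (2*(k:ℝ)*a^2*b^(2*k-1)*x)* |b'| := by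
    rw [abs_mul, abs_of_nonneg (by positivity : (0:ℝ) ≤ 2*(k:ℝ)*a^2*b^(2*k-1)*x)]
  have hk1 : |((k:ℝ) - 1)| ≤ (J:ℝ) + 1 := by
    rw [abs_le]; constructor
    · have : (0:ℝ) ≤ (k:ℝ) := Nat.cast_nonneg k
      linarith
    · have : (k:ℝ) ≤ (J:ℝ) := Nat.cast_le.mpr hk
      linarith
  have key : |((k:ℝ) - 1) * (a^2*b^(2*k))
      - ((2*a*b^(2*k)*x)*a' + (2*(k:ℝ)*a^2*b^(2*k-1)*x)*b')| ≤ C * (a^2*b^(2*k)) := by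
    rw [← mul_le_mul_iff_right₀ hc₁]
    have hCc : c₁ * (C * (a^2*b^(2*k))) = (c₁*((J:ℝ)+2) + 2*((J:ℝ)+1)*C₀)*(a^2*b^(2*k)) := by
      rw [hC]; field_simp
    rw [hCc]
    have t1 : |((k:ℝ) - 1) * (a^2*b^(2*k))
        - ((2*a*b^(2*k)*x)*a' + (2*(k:ℝ)*a^2*b^(2*k-1)*x)*b')|
        ≤ |((k:ℝ)-1)| *(a^2*b^(2*k)) + ((2*a*b^(2*k)*x)* |a'| + (2*(k:ℝ)*a^2*b^(2*k-1)*x)* |b'|) := by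
      calc _ ≤ |((k:ℝ) - 1) * (a^2*b^(2*k))| + |(2*a*b^(2*k)*x)*a' + (2*(k:ℝ)*a^2*b^(2*k-1)*x)*b'| :=
            abs_sub _ _
        _ ≤ _ := by
            rw [abs_mul, abs_of_pos hP]
            gcongr
            calc |(2*a*b^(2*k)*x)*a' + (2*(k:ℝ)*a^2*b^(2*k-1)*x)*b'|
                ≤ |(2*a*b^(2*k)*x)*a'| + |(2*(k:ℝ)*a^2*b^(2*k-1)*x)*b'| := abs_add_le _ _
              _ = _ := by rw [habs2, habs3]
    have t2 : c₁ * |((k:ℝ)-1)| ≤ c₁ * ((J:ℝ)+1) := mul_le_mul_of_nonneg_left hk1 hc₁.le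
    have hkJ : (k:ℝ) ≤ (J:ℝ) := Nat.cast_le.mpr hk
    nlinarith [mul_le_mul_of_nonneg_left t1 hc₁.le, mul_nonneg hC₀.le hP.le,
      mul_le_mul_of_nonneg_right (mul_le_mul_of_nonneg_left hkJ (by positivity : (0:ℝ) ≤ 2*C₀)) hP.le]
  calc |(((k:ℝ) - 1) * (a^2*b^(2*k)) - ((2*a*b^(2*k)*x)*a' + (2*(k:ℝ)*a^2*b^(2*k-1)*x)*b')) * pk
        - (a^2*b^(2*k)*x) * pk1|
      ≤ |(((k:ℝ) - 1) * (a^2*b^(2*k)) - ((2*a*b^(2*k)*x)*a' + (2*(k:ℝ)*a^2*b^(2*k-1)*x)*b')) * pk|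
        + |(a^2*b^(2*k)*x) * pk1| := abs_sub _ _
    _ = |((k:ℝ) - 1) * (a^2*b^(2*k)) - ((2*a*b^(2*k)*x)*a' + (2*(k:ℝ)*a^2*b^(2*k-1)*x)*b')| * |pk|
        + (a^2*b^(2*k)*x) * |pk1| := by
        rw [abs_mul, abs_mul, abs_of_pos (by positivity : (0:ℝ) < a^2*b^(2*k)*x)]
    _ ≤ C * (a^2*b^(2*k)) * |pk| + (a^2*b^(2*k)*x) * |pk1| := by
        exact add_le_add_left (mul_le_mul_of_nonneg_right key (abs_nonneg _)) _
    _ = a^2*b^(2*k) * (x* |pk1| + C* |pk|) := by ring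

end Aux


/-- bilinear estimate at the core of Lemma 8.5 (Bounds1), controlling
the pairing of `ψ` against `D^k(λζ′)`. -/
theorem bilinear_estimate_first_order_operator
    (J : ℕ) (w ρ : ℝ → ℝ) (hwρ : IsAdmissibleWeightPair (J + 1) w ρ) :
    ∃ C : ℝ, 0 < C ∧ ∀ ψ ζ : ℝ → ℝ, IsCcInfOnPos ψ → IsCcInfOnPos ζ →
      (∑ k ∈ Finset.range (J + 1),
          ∫ x in Set.Ioi (0 : ℝ),
            w x ^ 2 * ρ x ^ (2 * k) * iteratedDeriv k ψ x *
              iteratedDeriv k (fun y => y * deriv ζ y) x) ^ 2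
        ≤ (∑ k ∈ Finset.range (J + 1),
            ∫ x in Set.Ioi (0 : ℝ),
              w x ^ 2 * ρ x ^ (2 * k) *
                (x * |iteratedDeriv (k + 1) ψ x| + C * |iteratedDeriv k ψ x|) ^ 2)
          * sobNormSq w ρ J ζ := by
  obtain ⟨hws, hρs, hwpos, ⟨c₁, c₂, hc₁, hc₂, hρbound⟩, ⟨C₀, hC₀, hCbound⟩⟩ := hwρ
  have hCpos : (0:ℝ) < ((J:ℝ)+2) + 2*((J:ℝ)+1)*C₀/c₁ := by
    have h1 : (0:ℝ) < (J:ℝ)+2 := by positivity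
    have h2 : (0:ℝ) ≤ 2*((J:ℝ)+1)*C₀/c₁ :=
      div_nonneg (mul_nonneg (by positivity) hC₀.le) hc₁.le
    linarith
  refine ⟨((J:ℝ)+2) + 2*((J:ℝ)+1)*C₀/c₁, hCpos, ?_⟩
  set C : ℝ := ((J:ℝ)+2) + 2*((J:ℝ)+1)*C₀/c₁ with hCdef
  intro ψ ζ hψ hζ
  obtain ⟨hψs, hψcs, hψsupp⟩ := hψ
  obtain ⟨hζs, hζcs, hζsupp⟩ := hζ
  -- basic regularity
  have hwc : Continuous w := hws.continuous
  have hρc : Continuous ρ := hρs.continuous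
  have hwD := contDiff_infty_iff_deriv.mp (hws.of_le (by simp))
  have hρD := contDiff_infty_iff_deriv.mp (hρs.of_le (by simp))
  have hwdiff : Differentiable ℝ w := hwD.1
  have hρdiff : Differentiable ℝ ρ := hρD.1
  have hdw : Continuous (deriv w) := hwD.2.continuous
  have hdρ : Continuous (deriv ρ) := hρD.2.continuous
  have hψC : ∀ k, Continuous (iteratedDeriv k ψ) := iterCont hψs
  have hζC : ∀ k, Continuous (iteratedDeriv k ζ) := iterCont hζs
  have hρpos : ∀ x : ℝ, 0 ≤ x → 0 < ρ x := fun x hx =>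
    lt_of_lt_of_le (by positivity) (hρbound x hx).1
  -- integrability helper
  have mk_int : ∀ (h : ℝ → ℝ) (K : ℝ → ℝ), Continuous h → HasCompactSupport K →
      (∀ x, x ∉ tsupport K → h x = 0) → Integrable h := fun h K hc hK hz =>
    hc.integrable_of_hasCompactSupport (hK.mono' (Function.support_subset_iff'.mpr hz))
  -- the key functions
  set F : ℕ → ℝ → ℝ := fun k x =>
    (((k:ℝ) - 1) * (w x^2*ρ x^(2*k))
      - ((2*w x*ρ x^(2*k)*x)*(deriv w x) + (2*(k:ℝ)*w x^2*ρ x^(2*k-1)*x)*(deriv ρ x)))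
        * iteratedDeriv k ψ x
      - (w x^2*ρ x^(2*k)*x) * iteratedDeriv (k+1) ψ x with hFdef
  set q : ℕ → ℝ → ℝ := fun k x => w x * ρ x ^ k with hqdef
  set f : ℕ → ℝ → ℝ := fun k x => F k x / q k x with hfdef
  set g : ℕ → ℝ → ℝ := fun k x => q k x * iteratedDeriv k ζ x with hgdef
  set r : ℕ → ℝ → ℝ := fun k x =>
    w x^2*ρ x^(2*k) * (x * |iteratedDeriv (k+1) ψ x| + C * |iteratedDeriv k ψ x|)^2 with hrdef
  have hFcont : ∀ k, Continuous (F k) := by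
    intro k
    apply Continuous.sub
    · apply Continuous.mul _ (hψC k)
      apply Continuous.sub
      · exact continuous_const.mul ((hwc.pow 2).mul (hρc.pow _))
      · exact ((((continuous_const.mul hwc).mul (hρc.pow _)).mul continuous_id).mul hdw).add
          (((((continuous_const.mul (hwc.pow 2)).mul (hρc.pow _))).mul continuous_id).mul hdρ)
    · exact (((hwc.pow 2).mul (hρc.pow _)).mul continuous_id).mul (hψC (k+1))
  have hFzero : ∀ k x, x ∉ tsupport ψ → F k x = 0 := by
    intro k x hx
    have h1 := iter_zero hx k
    have h2 := iter_zero hx (k+1)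
    simp only [hFdef, h1, h2, mul_zero, sub_zero, zero_sub, neg_zero]
  have hζzero : ∀ k x, x ∉ Set.Ioi (0:ℝ) → iteratedDeriv k ζ x = 0 :=
    fun k x hx => iter_zero (fun h => hx (hζsupp h)) k
  have hψzero : ∀ k x, x ∉ Set.Ioi (0:ℝ) → iteratedDeriv k ψ x = 0 :=
    fun k x hx => iter_zero (fun h => hx (hψsupp h)) k
  -- Step A : LHS k-th term equals ∫ F k * ζ^{(k)}
  have stepA : ∀ k : ℕ,
      (∫ x in Set.Ioi (0:ℝ), w x ^ 2 * ρ x ^ (2 * k) * iteratedDeriv k ψ x *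
        iteratedDeriv k (fun y => y * deriv ζ y) x)
      = ∫ x in Set.Ioi (0:ℝ), F k x * iteratedDeriv k ζ x := by
    intro k
    set u : ℝ → ℝ := fun x => (w x^2*ρ x^(2*k)) * (x * iteratedDeriv k ψ x) with hudef
    set U' : ℝ → ℝ := fun x =>
      ((2:ℝ)*w x^(2-1)*(deriv w x) * ρ x^(2*k)
        + w x^2*(((2*k:ℕ):ℝ)*ρ x^(2*k-1)*(deriv ρ x))) * (x * iteratedDeriv k ψ x)
      + (w x^2*ρ x^(2*k)) * (1 * iteratedDeriv k ψ x + x * iteratedDeriv (k+1) ψ x) with hU'def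
    have hU : ∀ x, HasDerivAt u (U' x) x := by
      intro x
      exact (((hwdiff x).hasDerivAt.pow 2).mul ((hρdiff x).hasDerivAt.pow (2*k))).mul
        ((hasDerivAt_id x).mul (iterHasDerivAt hψs k x))
    have hζk : ∀ x, HasDerivAt (iteratedDeriv k ζ) (iteratedDeriv (k+1) ζ x) x :=
      iterHasDerivAt hζs k
    have hucont : Continuous u := ((hwc.pow 2).mul (hρc.pow _)).mul (continuous_id.mul (hψC k))
    have hU'cont : Continuous U' := by
      apply Continuous.add
      · exact ((((continuous_const.mul (hwc.pow _)).mul hdw).mul (hρc.pow _)).add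
          ((hwc.pow 2).mul ((continuous_const.mul (hρc.pow _)).mul hdρ))).mul
          (continuous_id.mul (hψC k))
      · exact ((hwc.pow 2).mul (hρc.pow _)).mul
          ((continuous_const.mul (hψC k)).add (continuous_id.mul (hψC (k+1))))
    have huzero : ∀ x, x ∉ tsupport ψ → u x = 0 := by
      intro x hx; simp only [hudef, iter_zero hx k, mul_zero]
    have hU'zero : ∀ x, x ∉ tsupport ψ → U' x = 0 := by
      intro x hx
      simp [hU'def, iter_zero hx k, iter_zero hx (k+1)]
    have huζ' : Integrable (fun x => u x * iteratedDeriv (k+1) ζ x) :=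
      mk_int _ ψ (hucont.mul (hζC (k+1))) hψcs (fun x hx => by rw [huzero x hx, zero_mul])
    have hU'ζ : Integrable (fun x => U' x * iteratedDeriv k ζ x) :=
      mk_int _ ψ (hU'cont.mul (hζC k)) hψcs (fun x hx => by rw [hU'zero x hx, zero_mul])
    have huζ : Integrable (fun x => u x * iteratedDeriv k ζ x) :=
      mk_int _ ψ (hucont.mul (hζC k)) hψcs (fun x hx => by rw [huzero x hx, zero_mul])
    have hibp : (∫ x : ℝ, u x * iteratedDeriv (k+1) ζ x)
        = - ∫ x : ℝ, U' x * iteratedDeriv k ζ x :=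
      integral_mul_deriv_eq_deriv_mul_of_integrable (fun x _ => hU x) (fun x _ => hζk x) huζ' hU'ζ huζ
    have e1 : (∫ x in Set.Ioi (0:ℝ), u x * iteratedDeriv (k+1) ζ x)
        = ∫ x : ℝ, u x * iteratedDeriv (k+1) ζ x :=
      setIntegral_eq_integral_of_forall_compl_eq_zero (fun x hx => by
        rw [huzero x (fun h => hx (hψsupp h)), zero_mul])
    have e2 : (∫ x in Set.Ioi (0:ℝ), U' x * iteratedDeriv k ζ x)
        = ∫ x : ℝ, U' x * iteratedDeriv k ζ x :=
      setIntegral_eq_integral_of_forall_compl_eq_zero (fun x hx => by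
        rw [hU'zero x (fun h => hx (hψsupp h)), zero_mul])
    have hkPζ : Integrable (fun x => ((k:ℝ) * (w x^2*ρ x^(2*k)) * iteratedDeriv k ψ x)
        * iteratedDeriv k ζ x) :=
      mk_int _ ψ (((continuous_const.mul ((hwc.pow 2).mul (hρc.pow _))).mul (hψC k)).mul (hζC k))
        hψcs (fun x hx => by rw [iter_zero hx k]; ring)
    calc (∫ x in Set.Ioi (0:ℝ), w x ^ 2 * ρ x ^ (2 * k) * iteratedDeriv k ψ x *
            iteratedDeriv k (fun y => y * deriv ζ y) x)
        = ∫ x in Set.Ioi (0:ℝ), (u x * iteratedDeriv (k+1) ζ x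
            + ((k:ℝ) * (w x^2*ρ x^(2*k)) * iteratedDeriv k ψ x) * iteratedDeriv k ζ x) := by
          refine setIntegral_congr_fun measurableSet_Ioi (fun x _ => ?_)
          rw [iterLeibniz hζs k x]
          simp only [hudef]; ring
      _ = (∫ x in Set.Ioi (0:ℝ), u x * iteratedDeriv (k+1) ζ x)
            + ∫ x in Set.Ioi (0:ℝ), ((k:ℝ) * (w x^2*ρ x^(2*k)) * iteratedDeriv k ψ x)
              * iteratedDeriv k ζ x :=
          integral_add huζ'.integrableOn hkPζ.integrableOn
      _ = (∫ x in Set.Ioi (0:ℝ), ((k:ℝ) * (w x^2*ρ x^(2*k)) * iteratedDeriv k ψ x)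
              * iteratedDeriv k ζ x)
            - ∫ x in Set.Ioi (0:ℝ), U' x * iteratedDeriv k ζ x := by
          rw [e1, hibp, ← e2]; ring
      _ = ∫ x in Set.Ioi (0:ℝ), (((k:ℝ) * (w x^2*ρ x^(2*k)) * iteratedDeriv k ψ x)
              * iteratedDeriv k ζ x - U' x * iteratedDeriv k ζ x) :=
          (integral_sub hkPζ.integrableOn hU'ζ.integrableOn).symm
      _ = ∫ x in Set.Ioi (0:ℝ), F k x * iteratedDeriv k ζ x := by
          refine setIntegral_congr_fun measurableSet_Ioi (fun x _ => ?_)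
          simp only [hU'def, hFdef]
          push_cast
          ring
  -- pointwise bound on F
  have hFbound : ∀ k, k ≤ J → ∀ x ∈ Set.Ioi (0:ℝ),
      |F k x| ≤ w x^2*ρ x^(2*k) * (x * |iteratedDeriv (k+1) ψ x| + C * |iteratedDeriv k ψ x|) := by
    intro k hk x hx
    have hx0 : (0:ℝ) < x := hx
    have hbx : 0 < ρ x := hρpos x hx0.le
    obtain ⟨hρ1, hw1⟩ := hCbound x hx0.le 1 le_rfl (by omega)
    rw [iteratedDeriv_one] at hρ1 hw1
    have ha' : ρ x * |deriv w x| ≤ C₀ * w x := by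
      have hw1' : |deriv w x| ≤ C₀ * w x * (ρ x)⁻¹ := by
        have : ρ x ^ (-((1:ℕ):ℤ)) = (ρ x)⁻¹ := by norm_num
        rwa [this] at hw1
      calc ρ x * |deriv w x| ≤ ρ x * (C₀ * w x * (ρ x)⁻¹) :=
            mul_le_mul_of_nonneg_left hw1' hbx.le
        _ = C₀ * w x := by field_simp
    have hb' : |deriv ρ x| ≤ C₀ := by simpa using hρ1
    have hxb : c₁ * x ≤ ρ x := by
      have := (hρbound x hx0.le).1
      nlinarith
    have hform : F k x = (((k:ℝ) - 1) * (w x^2*ρ x^(2*k))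
        - ((2*(w x)*(ρ x)^(2*k)*x)*(deriv w x)
          + (2*(k:ℝ)*(w x)^2*(ρ x)^(2*k-1)*x)*(deriv ρ x))) * iteratedDeriv k ψ x
        - ((w x)^2*(ρ x)^(2*k)*x) * iteratedDeriv (k+1) ψ x := by
      simp only [hFdef]
    rw [hform, hCdef]
    exact keybound J k hk hC₀ hc₁ (hwpos x) hbx hx0 ha' hb' hxb
  -- positivity of q on Ioi
  have hqpos : ∀ k, ∀ x ∈ Set.Ioi (0:ℝ), 0 < q k x := by
    intro k x hx
    have hρx := hρpos x (le_of_lt hx)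
    simp only [hqdef]
    exact mul_pos (hwpos x) (pow_pos hρx k)
  have hfg_eq : ∀ k, ∀ x ∈ Set.Ioi (0:ℝ), f k x * g k x = F k x * iteratedDeriv k ζ x := by
    intro k x hx
    have h := (hqpos k x hx).ne'
    simp only [hfdef, hgdef]
    field_simp
  have hqq : ∀ k x, q k x ^ 2 = w x^2*ρ x^(2*k) := by
    intro k x
    simp only [hqdef]
    rw [mul_pow, ← pow_mul, mul_comm k 2]
  have hgsq_eq : ∀ k x, g k x ^ 2 = w x^2*ρ x^(2*k) * (iteratedDeriv k ζ x)^2 := by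
    intro k x
    simp only [hgdef]
    rw [mul_pow, hqq]
  have hfsq_le : ∀ k, k ≤ J → ∀ x ∈ Set.Ioi (0:ℝ), f k x ^ 2 ≤ r k x := by
    intro k hk x hx
    have hqx : 0 < q k x := hqpos k x hx
    have h1 : |F k x| ≤ q k x ^ 2 *
        (x * |iteratedDeriv (k+1) ψ x| + C * |iteratedDeriv k ψ x|) := by
      rw [hqq]; exact hFbound k hk x hx
    have h2 : F k x ^ 2 ≤ (q k x ^ 2 *
        (x * |iteratedDeriv (k+1) ψ x| + C * |iteratedDeriv k ψ x|)) ^ 2 := by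
      have := pow_le_pow_left₀ (abs_nonneg (F k x)) h1 2
      rwa [sq_abs] at this
    have hr : r k x = q k x ^ 2 *
        (x * |iteratedDeriv (k+1) ψ x| + C * |iteratedDeriv k ψ x|) ^ 2 := by
      simp only [hrdef]; rw [hqq]
    simp only [hfdef]
    rw [div_pow, hr, div_le_iff₀ (by positivity)]
    nlinarith [h2]
  -- integrability
  have hrcont : ∀ k, Continuous (r k) := by
    intro k
    apply Continuous.mul ((hwc.pow 2).mul (hρc.pow _))
    exact ((continuous_id.mul (hψC (k+1)).abs).add
      (continuous_const.mul (hψC k).abs)).pow 2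
  have hIr : ∀ k, IntegrableOn (r k) (Set.Ioi (0:ℝ)) := by
    intro k
    refine (mk_int (r k) ψ (hrcont k) hψcs (fun x hx => ?_)).integrableOn
    simp only [hrdef, iter_zero hx k, iter_zero hx (k+1), abs_zero, mul_zero, add_zero,
      mul_zero]
    ring
  have hIg2 : ∀ k, IntegrableOn (fun x => g k x ^ 2) (Set.Ioi (0:ℝ)) := by
    intro k
    refine (mk_int _ ζ (((hwc.mul (hρc.pow _)).mul (hζC k)).pow 2) hζcs (fun x hx => ?_)).integrableOn
    show (w x * ρ x ^ k * iteratedDeriv k ζ x) ^ 2 = 0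
    rw [iter_zero hx k]
    ring
  have hIFζ : ∀ k, IntegrableOn (fun x => F k x * iteratedDeriv k ζ x) (Set.Ioi (0:ℝ)) := by
    intro k
    exact (mk_int _ ψ ((hFcont k).mul (hζC k)) hψcs
      (fun x hx => by show F k x * iteratedDeriv k ζ x = 0; rw [hFzero k x hx, zero_mul])).integrableOn
  have hIfg : ∀ k, IntegrableOn (fun x => f k x * g k x) (Set.Ioi (0:ℝ)) := by
    intro k
    refine (hIFζ k).congr ?_
    exact (ae_restrict_iff' measurableSet_Ioi).2 (.of_forall fun x hx => (hfg_eq k x hx).symm)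
  have hfmeas : ∀ k, AEStronglyMeasurable (fun x => f k x ^ 2)
      (volume.restrict (Set.Ioi (0:ℝ))) := by
    intro k
    have : Measurable (fun x => f k x ^ 2) := by
      have h1 : Measurable (F k) := (hFcont k).measurable
      have h2 : Measurable (q k) := (hwc.mul (hρc.pow _)).measurable
      exact (h1.div h2).pow_const 2
    exact this.aestronglyMeasurable
  have hIf2 : ∀ k, k ≤ J → IntegrableOn (fun x => f k x ^ 2) (Set.Ioi (0:ℝ)) := by
    intro k hk
    refine Integrable.mono' (hIr k) (hfmeas k) ?_
    refine (ae_restrict_iff' measurableSet_Ioi).2 (.of_forall fun x hx => ?_)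
    rw [Real.norm_eq_abs, abs_of_nonneg (sq_nonneg _)]
    exact hfsq_le k hk x hx
  -- the quadratic form argument
  set A : ℝ := ∑ k ∈ Finset.range (J + 1), ∫ x in Set.Ioi (0:ℝ), f k x ^ 2 with hAdef
  set S : ℝ := ∑ k ∈ Finset.range (J + 1), ∫ x in Set.Ioi (0:ℝ), f k x * g k x with hSdef
  set B : ℝ := sobNormSq w ρ J ζ with hBdef
  have hBsum : B = ∑ k ∈ Finset.range (J + 1), ∫ x in Set.Ioi (0:ℝ), g k x ^ 2 := by
    rw [hBdef]
    unfold sobNormSq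
    exact Finset.sum_congr rfl (fun k _ =>
      (setIntegral_congr_fun measurableSet_Ioi (fun x _ => (hgsq_eq k x))).symm)
  have hquad : ∀ t : ℝ, 0 ≤ A * (t * t) + (2 * S) * t + B := by
    intro t
    have h0 : 0 ≤ ∑ k ∈ Finset.range (J + 1),
        ∫ x in Set.Ioi (0:ℝ), (t * f k x + g k x)^2 :=
      Finset.sum_nonneg (fun k _ => setIntegral_nonneg measurableSet_Ioi (fun x _ => sq_nonneg _))
    have hexp : ∀ k ∈ Finset.range (J + 1),
        (∫ x in Set.Ioi (0:ℝ), (t * f k x + g k x)^2)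
        = (t*t) * (∫ x in Set.Ioi (0:ℝ), f k x ^ 2)
          + (2*t) * (∫ x in Set.Ioi (0:ℝ), f k x * g k x)
          + ∫ x in Set.Ioi (0:ℝ), g k x ^ 2 := by
      intro k hkmem
      have hk : k ≤ J := by
        have := Finset.mem_range.mp hkmem; omega
      have e : ∀ x : ℝ, (t * f k x + g k x)^2
          = (t*t) * f k x ^ 2 + (2*t) * (f k x * g k x) + g k x ^ 2 := fun x => by ring
      rw [setIntegral_congr_fun measurableSet_Ioi (fun x _ => e x)]
      have i1 : IntegrableOn (fun x => (t*t) * f k x ^ 2) (Set.Ioi (0:ℝ)) :=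
        (hIf2 k hk).const_mul _
      have i2 : IntegrableOn (fun x => (2*t) * (f k x * g k x)) (Set.Ioi (0:ℝ)) :=
        (hIfg k).const_mul _
      have i12 : IntegrableOn (fun x => (t*t) * f k x ^ 2 + (2*t) * (f k x * g k x))
          (Set.Ioi (0:ℝ)) := i1.add i2
      rw [integral_add i12 (hIg2 k), integral_add i1 i2, MeasureTheory.integral_const_mul,
        MeasureTheory.integral_const_mul]
    rw [Finset.sum_congr rfl hexp] at h0
    rw [Finset.sum_add_distrib, Finset.sum_add_distrib, ← Finset.mul_sum, ← Finset.mul_sum] at h0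
    rw [hBsum]
    rw [hAdef, hSdef]
    nlinarith [h0]
  have hdisc := discrim_le_zero hquad
  rw [discrim] at hdisc
  have hS2 : S ^ 2 ≤ A * B := by nlinarith [hdisc]
  -- conclusion
  have hLHS : (∑ k ∈ Finset.range (J + 1),
      ∫ x in Set.Ioi (0 : ℝ), w x ^ 2 * ρ x ^ (2 * k) * iteratedDeriv k ψ x *
        iteratedDeriv k (fun y => y * deriv ζ y) x) = S := by
    rw [hSdef]
    refine Finset.sum_congr rfl (fun k _ => ?_)
    rw [stepA k]
    exact (setIntegral_congr_fun measurableSet_Ioi (fun x hx => (hfg_eq k x hx).symm))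
  have hAle : A ≤ ∑ k ∈ Finset.range (J + 1),
      ∫ x in Set.Ioi (0:ℝ), w x ^ 2 * ρ x ^ (2 * k) *
        (x * |iteratedDeriv (k + 1) ψ x| + C * |iteratedDeriv k ψ x|) ^ 2 := by
    rw [hAdef]
    refine Finset.sum_le_sum (fun k hkmem => ?_)
    have hk : k ≤ J := by have := Finset.mem_range.mp hkmem; omega
    have : (∫ x in Set.Ioi (0:ℝ), w x ^ 2 * ρ x ^ (2 * k) *
        (x * |iteratedDeriv (k + 1) ψ x| + C * |iteratedDeriv k ψ x|) ^ 2)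
        = ∫ x in Set.Ioi (0:ℝ), r k x := by
      refine setIntegral_congr_fun measurableSet_Ioi (fun x _ => ?_)
      simp only [hrdef]
    rw [this]
    exact setIntegral_mono_on (hIf2 k hk) (hIr k) measurableSet_Ioi (hfsq_le k hk)
  have hBnonneg : 0 ≤ B := by
    rw [hBsum]
    exact Finset.sum_nonneg (fun k _ => setIntegral_nonneg measurableSet_Ioi
      (fun x _ => sq_nonneg _))
  rw [hLHS]
  calc S ^ 2 ≤ A * B := hS2
    _ ≤ _ := mul_le_mul_of_nonneg_right hAle hBnonneg
end
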